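/- Let F = {0011, 0110, 1100, 1001, 010101, 101010, 0001011101, 1011101000, 101110111011101, 010001000100010}. Every bi-infinite binary word that contains no factor of exponent ≥ 4 and avoids every word of F as a factor has exactly the same set of finite factors as g(f) or as the complement of g(f), where g is the morphism 0→01, 1→11 and f is the Fibonacci word. -/

import Mathlib

/-- Bitwise complement of a binary word. -/
def comp (x : List Bool) : List Bool := x.map (fun b => !b)

/-- An antisquare is a nonempty word of the form `y ++ comp y`. -/
def Antisquare (x : List Bool) : Prop := ∃ y : List Bool, y ≠ [] ∧ x = y ++ comp y

/-- `w` has period `p ≥ 1` if `w[i] = w[i+p]` whenever both indices are valid. -/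
def HasPeriod (w : List Bool) (p : ℕ) : Prop :=
  1 ≤ p ∧ ∀ i, i + p < w.length → w.getD i false = w.getD (i + p) false

/-- The exponent of a finite word: its length divided by its least period. -/
noncomputable def exponent (w : List Bool) : ℝ :=
  (w.length : ℝ) / ((sInf {p : ℕ | HasPeriod w p} : ℕ) : ℝ)

/-- `u` is a factor of the right-infinite word `w : ℕ → Bool`. -/
def FactorInf (u : List Bool) (w : ℕ → Bool) : Prop :=
  ∃ i : ℕ, u = (List.range u.length).map (fun t => w (i + t))

/-- `u` is a factor of the bi-infinite word `w : ℤ → Bool`. -/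
def FactorBi (u : List Bool) (w : ℤ → Bool) : Prop :=
  ∃ i : ℤ, u = (List.range u.length).map (fun t => w (i + (t : ℤ)))

/-- A binary word is good if its only antisquare factors are `01` and `10`. -/
def Good (w : List Bool) : Prop :=
  ∀ u, u <:+: w → Antisquare u → u = [false, true] ∨ u = [true, false]

/-- Apply a morphism (given on letters) to a word. -/
def applyM (m : Bool → List Bool) (w : List Bool) : List Bool := (w.map m).flatten

/-- The Fibonacci morphism: 0 → 01, 1 → 0. -/
def fibM : Bool → List Bool := fun b => if b then [false] else [false, true]

/-- Iterates of the Fibonacci morphism starting from 0. -/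
def fibIter : ℕ → List Bool
  | 0 => [false]
  | n + 1 => applyM fibM (fibIter n)

/-- The morphism g: 0 → 01, 1 → 11. -/
def gM : Bool → List Bool := fun b => if b then [true, true] else [false, true]

/-- The factors of g(f), where f is the Fibonacci word: since each `fibIter n` is a
prefix of f, these are exactly the factors of some `g(fibIter n)`. -/
def GFibFactor (u : List Bool) : Prop := ∃ n, u <:+: applyM gM (fibIter n)

/-- The set F of forbidden factors:
0011, 0110, 1100, 1001, 010101, 101010, 0001011101, 1011101000,
101110111011101, 010001000100010. -/
def Fset : List (List Bool) :=
  [[false, false, true, true],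
   [false, true, true, false],
   [true, true, false, false],
   [true, false, false, true],
   [false, true, false, true, false, true],
   [true, false, true, false, true, false],
   [false, false, false, true, false, true, true, true, false, true],
   [true, false, true, true, true, false, true, false, false, false],
   [true, false, true, true, true, false, true, true, true, false, true, true, true, false, true],
   [false, true, false, false, false, true, false, false, false, true, false, false, false, true, false]]

/-!
Exponent below 4 excludes fourth powers, in particular `0000` and `1111`. Reading rightwards
from an occurrence of `000`, the short words of `F` and `0001011101` force the next `000` four or
six letters later with no `111` in between; reading leftwards, `1011101000` does the same. So `w`
avoids `000` or `111`, and up to complement it avoids `000`.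

Then `00`, `0110` and `1111` are absent, consecutive zeros are two or four apart, and `w = g(x)`.
The fourth power `1111` and the words `010101`, `101110111011101` of `F` make `x` avoid `11`,
`000` and `0101010`, and `x` is fourth-power free with `w`. These four conditions hold for the
Fibonacci word and pass to the preimage under the Fibonacci morphism `φ`, so `w = g(φⁿ(z))` for
every `n` with `z` avoiding `11`. Every short factor of `w` then lies in `g(φⁿ(ab))` with
`ab ∈ {00, 01, 10}`, a factor of `g(f)`; conversely each block `g(φⁿ⁺¹(c))` of `w` has `g(φⁿ(0))`
as a prefix.
-/

open List hiding HasPeriod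

def window (w : ℤ → Bool) (i : ℤ) (n : ℕ) : List Bool := (range n).map fun t : ℕ => w (i + t)

section Window

variable {w : ℤ → Bool} {u v : List Bool} {i : ℤ}

@[simp] lemma length_window (w : ℤ → Bool) (i : ℤ) (n : ℕ) : (window w i n).length = n := by
  simp [window]

@[simp] lemma window_zero (w : ℤ → Bool) (i : ℤ) : window w i 0 = [] := rfl

lemma window_succ (w : ℤ → Bool) (i : ℤ) (n : ℕ) :
    window w i (n + 1) = w i :: window w (i + 1) n := by
  simp [window, range_succ_eq_map, Function.comp_def, add_assoc, add_comm (1 : ℤ)]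

lemma window_one (w : ℤ → Bool) (i : ℤ) : window w i 1 = [w i] := by
  simp only [window_succ, window_zero]

lemma window_two (w : ℤ → Bool) (i : ℤ) : window w i 2 = [w i, w (i + 1)] := by
  simp only [window_succ, window_zero]

lemma window_add (w : ℤ → Bool) (i : ℤ) (a b : ℕ) :
    window w i (a + b) = window w i a ++ window w (i + a) b := by
  simp [window, range_add, add_assoc]

lemma factorBi_iff_window : FactorBi u w ↔ ∃ i, window w i u.length = u := by
  simp [FactorBi, window, eq_comm (a := u), ← map_eq_flatMap, Function.comp_def]

lemma factorBi_window (w : ℤ → Bool) (i : ℤ) (n : ℕ) : FactorBi (window w i n) w :=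
  factorBi_iff_window.2 ⟨i, by rw [length_window]⟩

lemma window_infix_window {p : ℤ} {l L : ℕ} (hp : p ≤ i) (hL : i + l ≤ p + L) :
    window w i l <:+: window w p L := by
  obtain ⟨a, rfl⟩ : ∃ a : ℕ, i = p + a := ⟨(i - p).toNat, by omega⟩
  obtain ⟨b, rfl⟩ : ∃ b : ℕ, L = a + l + b := ⟨L - a - l, by omega⟩
  rw [window_add, window_add]
  exact ⟨window w p a, window w (p + a + l) b, by push_cast [add_assoc]; rfl⟩

lemma FactorBi.of_infix (huv : u <:+: v) (hv : FactorBi v w) : FactorBi u w := by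
  obtain ⟨i, hi⟩ := factorBi_iff_window.1 hv
  obtain ⟨s, t, hst⟩ := huv
  rw [← hi] at hst
  have hn : v.length = s.length + u.length + t.length := by
    simpa [add_assoc] using (congrArg length hst).symm
  rw [hn, window_add, window_add] at hst
  exact factorBi_iff_window.2 ⟨_, (append_inj (append_inj hst.symm (by simp)).1 (by simp)).2⟩

lemma FactorBi.exists_append (hu : FactorBi u w) : ∃ c, FactorBi (u ++ [c]) w := by
  obtain ⟨i, hi⟩ := factorBi_iff_window.1 hu
  refine ⟨w (i + u.length), ?_⟩
  have := factorBi_window w i (u.length + 1)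
  rwa [window_add, hi, window_one] at this

lemma FactorBi.exists_cons (hu : FactorBi u w) : ∃ c, FactorBi (c :: u) w := by
  obtain ⟨i, hi⟩ := factorBi_iff_window.1 hu
  refine ⟨w (i - 1), ?_⟩
  have := factorBi_window w (i - 1) (1 + u.length)
  rwa [window_add, window_one, Nat.cast_one, sub_add_cancel, hi] at this

lemma window_not (w : ℤ → Bool) (i : ℤ) (n : ℕ) :
    window (fun t => !w t) i n = comp (window w i n) := by
  simp [window, comp]

lemma comp_involutive : Function.Involutive comp := fun u => by
  simp [comp, Function.comp_def]

@[simp] lemma comp_length (u : List Bool) : (comp u).length = u.length := by simp [comp]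

lemma factorBi_not_iff : FactorBi u (fun t => !w t) ↔ FactorBi (comp u) w := by
  simp only [factorBi_iff_window, window_not, comp_involutive.eq_iff, comp_length]

end Window

def Avoids (L : List (List Bool)) (w : ℤ → Bool) : Prop := ∀ u ∈ L, ¬FactorBi u w

def FourthPowerFree (w : ℤ → Bool) : Prop :=
  ∀ u : List Bool, u ≠ [] → ¬FactorBi (u ++ u ++ u ++ u) w

section Avoidance

variable {w : ℤ → Bool} {L L' : List (List Bool)} {u v : List Bool}

lemma Avoids.mono (h : Avoids L w) (hL : L' ⊆ L) : Avoids L' w := fun u hu => h u (hL hu)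

lemma Avoids.append (h : Avoids L w) (h' : Avoids L' w) : Avoids (L ++ L') w := by
  simpa [Avoids, or_imp, forall_and] using And.intro h h'

lemma Avoids.not_factorBi (h : Avoids L w) (hv : ∃ u ∈ L, u <:+: v) : ¬FactorBi v w := by
  obtain ⟨u, hu, huv⟩ := hv
  exact fun hv => h u hu (hv.of_infix huv)

lemma Avoids.not_infix_window (h : Avoids L w) (i : ℤ) (n : ℕ) : ∀ u ∈ L, ¬u <:+: window w i n :=
  fun _ hu huv => h.not_factorBi ⟨_, hu, huv⟩ (factorBi_window w i n)

lemma avoids_not_iff : Avoids L (fun t => !w t) ↔ Avoids (L.map comp) w := by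
  simp [Avoids, factorBi_not_iff]

lemma FourthPowerFree.avoids (h : FourthPowerFree w) :
    Avoids [[false, false, false, false], [true, true, true, true]] w := by
  simpa [Avoids] using ⟨h [false] (by simp), h [true] (by simp)⟩

lemma FourthPowerFree.map_not (h : FourthPowerFree w) : FourthPowerFree (fun t => !w t) := by
  intro u hu hw
  exact h (comp u) (by simpa [comp] using hu) (by simpa [factorBi_not_iff, comp] using hw)

lemma hasPeriod_append_of_prefix (hu : u ≠ []) (h : v <+: u ++ v) :
    HasPeriod (u ++ v) u.length := by
  refine ⟨length_pos_iff.2 hu, fun i hi => ?_⟩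
  rw [length_append, Nat.add_comm, Nat.add_lt_add_iff_left] at hi
  rw [getD_append_right _ _ _ (i + u.length) (by omega), Nat.add_sub_cancel,
    getD_eq_getElem _ _ hi, getD_eq_getElem _ _ (by simp; omega), h.getElem hi]

lemma fourthPowerFree_of_exponent_lt (hexp : ∀ u, FactorBi u w → u ≠ [] → exponent u < 4) :
    FourthPowerFree w := by
  intro u hu hw
  have hper : HasPeriod (u ++ u ++ u ++ u) u.length := by
    simpa only [append_assoc] using
      hasPeriod_append_of_prefix (v := u ++ u ++ u) hu ⟨u, by simp⟩
  set q := sInf {p | HasPeriod (u ++ u ++ u ++ u) p}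
  have hq : 1 ≤ q := (Nat.sInf_mem (s := {p | HasPeriod _ p}) ⟨_, hper⟩).1
  have hqu : q ≤ u.length := Nat.sInf_le hper
  have : 4 ≤ exponent (u ++ u ++ u ++ u) := by
    rw [exponent, le_div_iff₀ (by exact_mod_cast hq)]
    simp only [length_append, Nat.cast_add]
    have : (q : ℝ) ≤ u.length := by exact_mod_cast hqu
    linarith
  exact (hexp _ hw (by simp [hu])).not_ge this

end Avoidance

section Morphism

lemma applyM_eq_flatMap (m : Bool → List Bool) (u : List Bool) : applyM m u = u.flatMap m := rfl

lemma applyM_applyM (m₁ m₂ : Bool → List Bool) (u : List Bool) :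
    applyM m₂ (applyM m₁ u) = applyM (fun c => applyM m₂ (m₁ c)) u := flatMap_assoc

lemma applyM_ne_nil {m : Bool → List Bool} (hm : ∀ c, m c ≠ []) {u : List Bool} (hu : u ≠ []) :
    applyM m u ≠ [] := by
  obtain ⟨c, u, rfl⟩ := ne_nil_iff_exists_cons.1 hu
  simp [applyM_eq_flatMap, hm c]

lemma length_applyM_gM (u : List Bool) : (applyM gM u).length = 2 * u.length := by
  induction u with
  | nil => rfl
  | cons c u ih => cases c <;> simp [applyM_eq_flatMap, gM] at ih ⊢ <;> omega

def fibPow : ℕ → Bool → List Bool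
  | 0, c => [c]
  | n + 1, c => applyM (fibPow n) (fibM c)

lemma fibPow_succ_false (n : ℕ) : fibPow (n + 1) false = fibPow n false ++ fibPow n true := by
  simp [fibPow, fibM, applyM_eq_flatMap]

lemma fibPow_succ_true (n : ℕ) : fibPow (n + 1) true = fibPow n false := by
  simp [fibPow, fibM, applyM_eq_flatMap]

lemma applyM_fibPow_fibIter (n k : ℕ) : applyM (fibPow n) (fibIter k) = fibIter (k + n) := by
  induction n generalizing k with
  | zero => simp [applyM_eq_flatMap, fibPow]
  | succ n ih =>
    calc applyM (fibPow (n + 1)) (fibIter k) = applyM (fibPow n) (fibIter (k + 1)) :=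
          (applyM_applyM _ _ _).symm
      _ = fibIter (k + (n + 1)) := by rw [ih, Nat.add_right_comm, add_assoc]

lemma fibPow_false (n : ℕ) : fibPow n false = fibIter n := by
  simpa [fibIter, applyM_eq_flatMap] using applyM_fibPow_fibIter n 0

lemma fibIter_prefix_fibPow (n : ℕ) (c : Bool) : fibIter n <+: fibPow (n + 1) c := by
  rw [← fibPow_false]
  cases c
  · exact ⟨fibPow n true, (fibPow_succ_false n).symm⟩
  · rw [fibPow_succ_true]

lemma length_fibPow (n : ℕ) :
    (fibPow n false).length = Nat.fib (n + 2) ∧ (fibPow n true).length = Nat.fib (n + 1) := by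
  induction n with
  | zero => simp [fibPow]
  | succ n ih =>
    rw [fibPow_succ_false, fibPow_succ_true, length_append, ih.1, ih.2, add_comm,
      Nat.fib_add_two (n := n + 1)]
    exact ⟨rfl, rfl⟩

lemma le_length_fibPow (n : ℕ) (c : Bool) : n ≤ (fibPow n c).length := by
  have h₁ := Nat.le_fib_add_one (n + 1)
  have h₂ : Nat.fib (n + 1) ≤ Nat.fib (n + 2) := Nat.fib_mono (by omega)
  cases c <;> simp only [(length_fibPow n).1, (length_fibPow n).2] <;> omega

end Morphism

/-- `w = m(x)`, the block `m (x k)` occurring in `w` at position `s k`. -/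
def IsMorphImage (m : Bool → List Bool) (x : ℤ → Bool) (s : ℤ → ℤ) (w : ℤ → Bool) : Prop :=
  ∀ k, s (k + 1) = s k + (m (x k)).length ∧ window w (s k) (m (x k)).length = m (x k)

namespace IsMorphImage

variable {m : Bool → List Bool} {x w : ℤ → Bool} {s : ℤ → ℤ} {u : List Bool}

lemma window_applyM (h : IsMorphImage m x s w) (k : ℤ) (n : ℕ) :
    s (k + n) = s k + (applyM m (window x k n)).length ∧
      window w (s k) (applyM m (window x k n)).length = applyM m (window x k n) := by
  induction n with
  | zero => simp [window, applyM_eq_flatMap]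
  | succ n ih =>
    obtain ⟨hs, hw⟩ := h (k + n)
    have hx : applyM m (window x k (n + 1)) = applyM m (window x k n) ++ m (x (k + n)) := by
      rw [window_add, window_one, applyM_eq_flatMap, flatMap_append, flatMap_singleton]; rfl
    rw [hx, length_append, window_add, ← ih.1, ih.2, hw, Nat.cast_add, Nat.cast_add, ← add_assoc,
      ← add_assoc, Nat.cast_one, hs, ih.1]
    exact ⟨rfl, rfl⟩

lemma factorBi_applyM (h : IsMorphImage m x s w) (hu : FactorBi u x) : FactorBi (applyM m u) w := by
  obtain ⟨k, hk⟩ := factorBi_iff_window.1 hu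
  rw [← hk, ← (h.window_applyM k u.length).2]
  exact factorBi_window _ _ _

lemma trans {m' : Bool → List Bool} {y : ℤ → Bool} {s' : ℤ → ℤ} (h' : IsMorphImage m' y s' x)
    (h : IsMorphImage m x s w) : IsMorphImage (fun c => applyM m (m' c)) y (s ∘ s') w := by
  intro k
  obtain ⟨hs', hx'⟩ := h' k
  have := h.window_applyM (s' k) (m' (y k)).length
  rw [hx'] at this
  exact ⟨by rw [Function.comp_apply, hs', this.1]; rfl, this.2⟩

lemma add_sub_le (h : IsMorphImage m x s w) (hm : ∀ c, m c ≠ []) {a b : ℤ} (hab : a ≤ b) :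
    s a + (b - a) ≤ s b := by
  induction b, hab using Int.leInduction with
  | base => simp
  | succ b _ ih =>
    have := (h b).1
    have := length_pos_iff.2 (hm (x b))
    omega

lemma exists_mem_block (h : IsMorphImage m x s w) (hm : ∀ c, m c ≠ []) (i : ℤ) :
    ∃ k, s k ≤ i ∧ i < s (k + 1) := by
  have hbdd : ∃ b, ∀ k, s k ≤ i → k ≤ b := by
    refine ⟨max 0 (i - s 0), fun k hk => ?_⟩
    rcases le_total 0 k with h0 | h0
    · have := h.add_sub_le hm h0
      omega
    · omega
  have hne : ∃ k, s k ≤ i := by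
    refine ⟨min 0 (i - s 0), ?_⟩
    have := h.add_sub_le hm (min_le_left 0 (i - s 0))
    omega
  obtain ⟨k, hk, hmax⟩ := Int.exists_greatest_of_bdd hbdd hne
  exact ⟨k, hk, lt_of_not_ge fun hk' => by have := hmax (k + 1) hk'; omega⟩

lemma exists_factorBi_pair (h : IsMorphImage m x s w) (hm : ∀ c, m c ≠ [])
    (hlen : ∀ c, u.length ≤ (m c).length) (hu : FactorBi u w) :
    ∃ a b, FactorBi [a, b] x ∧ u <:+: applyM m [a, b] := by
  obtain ⟨i, hi⟩ := factorBi_iff_window.1 hu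
  obtain ⟨k, hk, hk'⟩ := h.exists_mem_block hm i
  refine ⟨x k, x (k + 1), window_two x k ▸ factorBi_window x k 2, ?_⟩
  obtain ⟨h2s, h2w⟩ := h.window_applyM k 2
  rw [window_two] at h2s h2w
  rw [← hi, ← h2w]
  apply window_infix_window hk
  have := (h (k + 1)).1
  have := hlen (x (k + 1))
  rw [Nat.cast_ofNat, show k + 2 = k + 1 + 1 by ring] at h2s
  omega

end IsMorphImage

section FibDesubstitution

variable {y : ℤ → Bool}

lemma eq_false_of_not_factorBi_11 (hy : ¬FactorBi [true, true] y) {p : ℤ} (hp : y p = true) :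
    y (p + 1) = false := by
  by_contra h
  exact hy (factorBi_iff_window.2 ⟨p, by simp_all [window_two]⟩)

def nextZero (y : ℤ → Bool) (p : ℤ) : ℤ := if y (p + 1) then p + 2 else p + 1

def prevZero (y : ℤ → Bool) (p : ℤ) : ℤ := if y (p - 1) then p - 2 else p - 1

/-- Without the factor `11`, consecutive zeros of `y` are at distance 1 or 2, so stepping to the
next zero permutes the zeros. -/
def zeroSucc (hy : ¬FactorBi [true, true] y) : Equiv.Perm {p // y p = false} where
  toFun p := ⟨nextZero y p, by
    unfold nextZero
    cases h : y (p + 1)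
    · simpa using h
    · simpa [add_assoc] using eq_false_of_not_factorBi_11 hy h⟩
  invFun p := ⟨prevZero y p, by
    unfold prevZero
    cases h : y (p - 1)
    · simpa using h
    · by_contra h'
      have := eq_false_of_not_factorBi_11 hy (Bool.not_eq_false _ ▸ h')
      simp_all [show (p : ℤ) - 2 + 1 = p - 1 by ring]⟩
  left_inv p := by
    obtain ⟨p, hp⟩ := p
    ext
    cases h : y (p + 1) <;> simp [nextZero, prevZero, h, hp, show p + 2 - 1 = p + 1 by ring]
  right_inv p := by
    obtain ⟨p, hp⟩ := p
    ext
    cases h : y (p - 1) <;> simp [nextZero, prevZero, h, hp, show p - 2 + 1 = p - 1 by ring]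

lemma exists_isMorphImage_fibM (hy : ¬FactorBi [true, true] y) :
    ∃ y' s, IsMorphImage fibM y' s y := by
  obtain ⟨z, hz⟩ : ∃ z, y z = false := by
    cases h : y 0
    · exact ⟨0, h⟩
    · exact ⟨0 + 1, eq_false_of_not_factorBi_11 hy h⟩
  set s : ℤ → ℤ := fun k => ((zeroSucc hy ^ k) ⟨z, hz⟩ : {p // y p = false})
  have hs : ∀ k, s (k + 1) = nextZero y (s k) := fun k => by
    simp only [s, add_comm k 1, zpow_one_add, Equiv.Perm.mul_apply]
    rfl
  refine ⟨fun k => !y (s k + 1), s, fun k => ?_⟩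
  have hzero : y (s k) = false := ((zeroSucc hy ^ k) ⟨z, hz⟩).2
  rw [hs k, nextZero]
  cases h : y (s k + 1) <;> simp [fibM, window_one, window_two, h, hzero]

end FibDesubstitution

def fibForbidden : List (List Bool) :=
  [[true, true], [false, false, false], [false, true, false, true, false, true, false]]

/-- Conditions satisfied by the Fibonacci word and inherited by `fibM`-preimages. -/
def FibLike (y : ℤ → Bool) : Prop := Avoids fibForbidden y ∧ FourthPowerFree y

lemma FourthPowerFree.of_isMorphImage {m : Bool → List Bool} {x w : ℤ → Bool} {s : ℤ → ℤ}
    (hw : FourthPowerFree w) (h : IsMorphImage m x s w) (hm : ∀ c, m c ≠ []) :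
    FourthPowerFree x := fun u hu hx =>
  hw _ (applyM_ne_nil hm hu) (by simpa [applyM_eq_flatMap] using h.factorBi_applyM hx)

lemma FibLike.exists_fibM_preimage {y : ℤ → Bool} (hy : FibLike y) :
    ∃ y' s, FibLike y' ∧ IsMorphImage fibM y' s y := by
  obtain ⟨hav, h4⟩ := hy
  obtain ⟨y', s, hs⟩ := exists_isMorphImage_fibM (hav _ (by decide))
  refine ⟨y', s, ⟨fun u hu hu' => ?_, h4.of_isMorphImage hs (by decide)⟩, hs⟩
  have hav' : Avoids (fibForbidden ++
      [[false, true, false, false, true, false, false, true, false, false, true, false]]) y :=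
    hav.append (by simpa [Avoids] using h4 [false, true, false] (by simp))
  have key : ∀ u ∈ fibForbidden, ∀ c, ∃ v ∈ fibForbidden ++
      [[false, true, false, false, true, false, false, true, false, false, true, false]],
      v <:+: applyM fibM (u ++ [c]) := by
    decide
  obtain ⟨c, hc⟩ := hu'.exists_append
  exact hav'.not_factorBi (key u hu c) (hs.factorBi_applyM hc)

section GFib

variable {w : ℤ → Bool}

def gFibForbidden : List (List Bool) :=
  [[false, false, false], [false, true, true, false], [true, false, false, true],
   [false, true, false, true, false, true],
   [true, false, true, true, true, false, true, true, true, false, true, true, true, false, true]]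

lemma not_factorBi_00 (hw : Avoids gFibForbidden w) : ¬FactorBi [false, false] w := by
  intro h
  obtain ⟨c, hc⟩ := h.exists_cons
  obtain ⟨d, hd⟩ := hc.exists_append
  refine hw.not_factorBi ?_ hd
  clear hc hd
  revert c d
  decide

def ZeroGapsTwoOrFour (w : ℤ → Bool) : Prop :=
  ∀ p, w p = false → w (p + 1) = true ∧ (w (p + 2) = false ∨ w (p + 3) = true ∧ w (p + 4) = false)

lemma zeroGapsTwoOrFour_of_avoids (hw : Avoids gFibForbidden w) (h4 : FourthPowerFree w) :
    ZeroGapsTwoOrFour w := by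
  intro p hp
  have hL : Avoids [[false, false], [false, true, true, false], [true, true, true, true]] w := by
    intro u hu
    simp only [mem_cons, mem_nil_iff, or_false] at hu
    rcases hu with rfl | rfl | rfl
    · exact not_factorBi_00 hw
    · exact hw _ (by decide)
    · exact h4.avoids _ (by decide)
  have key : ∀ a b c d : Bool, (∀ u ∈ [[false, false], [false, true, true, false],
      [true, true, true, true]], ¬u <:+: [false, a, b, c, d]) →
      a = true ∧ (b = false ∨ c = true ∧ d = false) := by
    decide
  apply key
  have hwin : window w p 5 = [false, w (p + 1), w (p + 2), w (p + 3), w (p + 4)] := by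
    simp only [window_succ, window_zero, add_assoc, Int.reduceAdd, hp]
  exact hwin ▸ hL.not_infix_window p 5

lemma ZeroGapsTwoOrFour.even (h : ZeroGapsTwoOrFour w) (n : ℕ) {p : ℤ} (hp : w p = false)
    (hn : w (p + n) = false) : Even n := by
  induction n using Nat.strong_induction_on generalizing p with
  | _ n ih =>
    obtain ⟨h₁, h₂ | ⟨h₃, h₄⟩⟩ := h p hp
    · rcases n with _ | _ | n
      · exact ⟨0, rfl⟩
      · simp_all
      · have := ih n (by omega) h₂ (by rw [← hn]; push_cast; ring_nf)
        simpa [Nat.even_add] using this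
    · rcases n with _ | _ | _ | _ | n
      · exact ⟨0, rfl⟩
      · simp_all
      · exact even_two
      · simp_all
      · have := ih n (by omega) h₄ (by rw [← hn]; push_cast; ring_nf)
        simpa [Nat.even_add] using this

lemma ZeroGapsTwoOrFour.eq_true_odd (h : ZeroGapsTwoOrFour w) {p : ℤ} (hp : w p = false) (k : ℤ) :
    w (p + 2 * k + 1) = true := by
  by_contra hk'
  rw [Bool.not_eq_true] at hk'
  rcases le_or_gt 0 k with hk | hk
  · obtain ⟨n, rfl⟩ := Int.eq_ofNat_of_zero_le hk
    exact Nat.not_even_two_mul_add_one n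
      (h.even (2 * n + 1) hp (by push_cast; rwa [← add_assoc]))
  · obtain ⟨n, hn⟩ : ∃ n : ℕ, (n : ℤ) = -(2 * k + 1) := ⟨(-(2 * k + 1)).toNat, by omega⟩
    obtain ⟨r, hr⟩ := h.even n hk' (by rw [hn]; ring_nf; exact hp)
    omega

lemma isMorphImage_gM {p : ℤ} (hodd : ∀ k, w (p + 2 * k + 1) = true) :
    IsMorphImage gM (fun k => w (p + 2 * k)) (fun k => p + 2 * k) w := fun k => by
  cases h : w (p + 2 * k) <;> simp [gM, window_two, h, hodd k] <;> ring

lemma exists_fibLike_gM_preimage (hw : Avoids gFibForbidden w) (h4 : FourthPowerFree w) :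
    ∃ x s, FibLike x ∧ IsMorphImage gM x s w := by
  obtain ⟨p, hp⟩ : ∃ p, w p = false := by
    by_contra! h
    exact h4.avoids [true, true, true, true] (by decide)
      (factorBi_iff_window.2 ⟨0, by simp_all [window_succ]⟩)
  have hs := isMorphImage_gM ((zeroGapsTwoOrFour_of_avoids hw h4).eq_true_odd hp)
  refine ⟨_, _, ⟨fun u hu hu' => ?_, h4.of_isMorphImage hs (by decide)⟩, hs⟩
  have key : ∀ u ∈ fibForbidden, ∀ c, ∃ v ∈ gFibForbidden ++ [[false, false, false, false],
      [true, true, true, true]], v <:+: applyM gM (c :: u) := by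
    decide
  obtain ⟨c, hc⟩ := hu'.exists_cons
  exact (hw.append h4.avoids).not_factorBi (key u hu c) (hs.factorBi_applyM hc)

lemma exists_fibLike_preimage_gM_fibPow (hw : Avoids gFibForbidden w) (h4 : FourthPowerFree w)
    (n : ℕ) : ∃ z s, FibLike z ∧ IsMorphImage (fun c => applyM gM (fibPow n c)) z s w := by
  induction n with
  | zero =>
    obtain ⟨x, s, hx, hs⟩ := exists_fibLike_gM_preimage hw h4
    exact ⟨x, s, hx, by simpa [fibPow, applyM_eq_flatMap] using hs⟩
  | succ n ih =>
    obtain ⟨z, s, hz, hs⟩ := ih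
    obtain ⟨z', s', hz', hs'⟩ := hz.exists_fibM_preimage
    exact ⟨z', s ∘ s', hz', by simpa only [fibPow, applyM_applyM] using hs'.trans hs⟩

lemma fibPow_ne_nil (n : ℕ) (c : Bool) : fibPow n c ≠ [] := by
  rw [← length_pos_iff]
  cases c <;> simp [length_fibPow, Nat.fib_pos]

theorem setOf_factorBi_eq_setOf_gFibFactor (hw : Avoids gFibForbidden w) (h4 : FourthPowerFree w) :
    {u | FactorBi u w} = {u | GFibFactor u} := by
  have hne : ∀ n c, applyM gM (fibPow n c) ≠ [] := fun n c =>
    applyM_ne_nil (by decide) (fibPow_ne_nil n c)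
  ext u
  constructor
  · intro hu
    obtain ⟨z, s, hz, hs⟩ := exists_fibLike_preimage_gM_fibPow hw h4 u.length
    obtain ⟨a, b, hab, hu'⟩ := hs.exists_factorBi_pair (hne _) (fun c => by
      rw [length_applyM_gM]; have := le_length_fibPow u.length c; omega) hu
    have hab3 : [a, b] <:+: fibIter 3 := by
      have h11 : [a, b] ≠ [true, true] := fun h => hz.1 _ (by decide) (h ▸ hab)
      clear hab hu'
      revert a b
      decide
    refine ⟨3 + u.length, hu'.trans ?_⟩
    rw [← applyM_fibPow_fibIter, applyM_applyM]
    exact hab3.flatMap _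
  · rintro ⟨n, hn⟩
    obtain ⟨z, s, -, hs⟩ := exists_fibLike_preimage_gM_fibPow hw h4 (n + 1)
    have := hs.factorBi_applyM (factorBi_window z 0 1)
    rw [window_one, applyM_eq_flatMap, flatMap_singleton] at this
    exact this.of_infix (hn.trans ((fibIter_prefix_fibPow n (z 0)).flatMap gM).isInfix)

end GFib

section Runs

variable {w : ℤ → Bool} {u : List Bool} {L : List (List Bool)}

lemma window_reflect (w : ℤ → Bool) (j : ℤ) (n : ℕ) :
    window (fun t => w (-t)) j n = (window w (1 - j - n) n).reverse := by
  refine ext_getElem (by simp) fun t h _ => ?_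
  simp only [length_window] at h
  simp only [window, getElem_reverse, getElem_map, getElem_range, length_map, length_range]
  congr 1
  omega

lemma factorBi_reflect_iff : FactorBi u (fun t => w (-t)) ↔ FactorBi u.reverse w := by
  simp only [factorBi_iff_window, window_reflect, reverse_eq_iff, length_reverse]
  constructor
  · rintro ⟨j, hj⟩
    exact ⟨_, hj⟩
  · rintro ⟨i, hi⟩
    exact ⟨1 - i - u.length, by rwa [show 1 - (1 - i - u.length) - u.length = i by ring]⟩

lemma avoids_reflect_iff : Avoids L (fun t => w (-t)) ↔ Avoids (L.map reverse) w := by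
  simp only [Avoids, factorBi_reflect_iff, forall_mem_map]

def runForbidden : List (List Bool) :=
  Fset ++ [[false, false, false, false], [true, true, true, true]]

lemma exists_next_window_000 (hw : Avoids runForbidden w) {i : ℤ}
    (h : window w i 3 = [false, false, false]) :
    ∃ d : ℕ, 0 < d ∧ window w (i + d) 3 = [false, false, false] ∧
      ¬[true, true, true] <:+: window w i (d + 3) := by
  have key : ∀ a b c d e f g : Bool,
      (∀ u ∈ runForbidden, ¬u <:+: [false, false, false, a, b, c, d, e, f, g]) →
      [a, b, c, d] = [true, false, false, false] ∨
        [a, b, c, d, e, f] = [true, false, true, false, false, false] := by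
    decide
  simp only [window_succ, window_zero, add_assoc, Int.reduceAdd, cons.injEq, and_true] at h
  have hv := hw.not_infix_window i 10
  simp only [window_succ, window_zero, add_assoc, Int.reduceAdd, h] at hv
  rcases key _ _ _ _ _ _ _ hv with h' | h' <;> simp only [cons.injEq, and_true] at h'
  · refine ⟨4, by norm_num, ?_, ?_⟩ <;>
      simp only [window_succ, window_zero, add_assoc, Int.reduceAdd, Nat.cast_ofNat, h, h']
    decide
  · refine ⟨6, by norm_num, ?_, ?_⟩ <;>
      simp only [window_succ, window_zero, add_assoc, Int.reduceAdd, Nat.cast_ofNat, h, h']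
    decide

lemma window_ne_111_of_le (hw : Avoids runForbidden w) {i t : ℤ}
    (h : window w i 3 = [false, false, false]) (hit : i ≤ t) :
    window w t 3 ≠ [true, true, true] := by
  suffices ∀ n : ℕ, ∀ i, window w i 3 = [false, false, false] → ∀ t, i ≤ t → t < i + n →
      window w t 3 ≠ [true, true, true] from
    this ((t - i).toNat + 1) i h t hit (by omega)
  intro n
  induction n with
  | zero => intro i _ t h₁ h₂; omega
  | succ n ih =>
    intro i hi t hit htn
    obtain ⟨d, hd, hd₀, hd₁⟩ := exists_next_window_000 hw hi
    by_cases htd : t < i + d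
    · intro h₁
      exact hd₁ (h₁ ▸ window_infix_window hit (by omega))
    · exact ih (i + d) hd₀ t (by omega) (by omega)

lemma avoids_000_or_111 (hw : Avoids runForbidden w) :
    Avoids [[false, false, false]] w ∨ Avoids [[true, true, true]] w := by
  simp only [Avoids, mem_singleton, forall_eq, factorBi_iff_window, not_exists, length_cons,
    length_nil]
  by_contra! ⟨⟨i, hi⟩, ⟨t, ht⟩⟩
  rcases le_total i t with hit | hti
  · exact window_ne_111_of_le hw hi hit ht
  · -- `runForbidden` is closed under reversal, so searching leftwards in `w` is searching
    -- rightwards in its reflection.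
    have hw' : Avoids runForbidden (fun t => w (-t)) := avoids_reflect_iff.2 (hw.mono (by decide))
    refine window_ne_111_of_le hw' (i := -i - 2) (t := -t - 2) ?_ (by omega) ?_
    · rw [window_reflect, show 1 - (-i - 2) - ((2 + 1 : ℕ) : ℤ) = i by push_cast; ring, hi]
      rfl
    · rw [window_reflect, show 1 - (-t - 2) - ((2 + 1 : ℕ) : ℤ) = t by push_cast; ring, ht]
      rfl

end Runs

/-- every bi-infinite binary word with no factor of exponent ≥ 4 that
avoids every word of F has the same set of finite factors as g(f) or as the
complement of g(f). -/
theorem stmt_4 (w : ℤ → Bool)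
    (hexp : ∀ u, FactorBi u w → u ≠ [] → exponent u < 4)
    (hF : ∀ f ∈ Fset, ¬ FactorBi f w) :
    {u | FactorBi u w} = {u | GFibFactor u} ∨
    {u | FactorBi u w} = {u | GFibFactor (comp u)} := by
  have h4 := fourthPowerFree_of_exponent_lt hexp
  have hw : Avoids runForbidden w := Avoids.append hF h4.avoids
  rcases avoids_000_or_111 hw with h000 | h111
  · exact Or.inl (setOf_factorBi_eq_setOf_gFibFactor ((h000.append hw).mono (by decide)) h4)
  · have hw' : Avoids gFibForbidden (fun t => !w t) :=
      avoids_not_iff.2 ((h111.append hw).mono (by decide))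
    refine Or.inr (Set.ext fun u => ?_)
    simpa [factorBi_not_iff, comp_involutive u] using
      Set.ext_iff.1 (setOf_factorBi_eq_setOf_gFibFactor hw' h4.map_not) (comp u)
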